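/- arXiv:2308.12200 — 5 statements merged into one kernel-verified Lean document; each statement's English description precedes it below -/
import Mathlib

section
/- Let λ ∈ ℤ^n be dominant and M = (m_{i,j}) a Gel'fand–Tsetlin pattern of type λ. Define r(M) := ∏_{1≤i≤j<k≤n} [(m_{i,k}−m_{j,k−1}−i+j)! · (m_{i,k−1}−m_{j+1,k}−i+j)!] / [(m_{i,k−1}−m_{j,k−1}−i+j)! · (m_{i,k}−m_{j+1,k}−i+j)!]. Then r(M^∨) = r(M), where M^∨ is the dual pattern with entries m^∨_{i,j} = −m_{j+1−i,j}. -/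
/-- `λ` is dominant: `λ_1 ≥ λ_2 ≥ … ≥ λ_n` (1-indexed). -/
def IsDominant (n : ℕ) (lam : ℕ → ℤ) : Prop :=
  ∀ i : ℕ, 1 ≤ i → i < n → lam (i + 1) ≤ lam i

/-- `M = (m_{i,j})_{1 ≤ i ≤ j ≤ n}` is a Gel'fand–Tsetlin pattern of type `λ`:
the top row is `λ` and the rows interlace:  `m_{i,j+1} ≥ m_{i,j} ≥ m_{i+1,j+1}`. -/
def IsGTPattern (n : ℕ) (lam : ℕ → ℤ) (m : ℕ → ℕ → ℤ) : Prop :=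
  (∀ i : ℕ, 1 ≤ i → i ≤ n → m i n = lam i) ∧
  (∀ i j : ℕ, 1 ≤ i → i ≤ j → j + 1 ≤ n → m i j ≤ m i (j + 1) ∧ m (i + 1) (j + 1) ≤ m i j)

/-- The `j`-th component of the weight `γ^M` of a triangular array. -/
def gtWeight (m : ℕ → ℕ → ℤ) (j : ℕ) : ℤ :=
  (∑ i ∈ Finset.Icc 1 j, m i j) - ∑ i ∈ Finset.Icc 1 (j - 1), m i (j - 1)

/-- `q(M) = Σ_{1 ≤ i ≤ j ≤ n-1} m_{i,j}`. -/
def gtQ (n : ℕ) (m : ℕ → ℕ → ℤ) : ℤ :=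
  ∑ j ∈ Finset.Icc 1 (n - 1), ∑ i ∈ Finset.Icc 1 j, m i j

/-- The dual triangular array `M^∨`, with `m^∨_{i,j} = -m_{j+1-i,j}`. -/
def gtDual (m : ℕ → ℕ → ℤ) : ℕ → ℕ → ℤ := fun i j => - m (j + 1 - i) j

/-- Factorial of an integer (arguments are nonnegative in all uses). -/
def ifact (a : ℤ) : ℚ := (Nat.factorial a.toNat : ℚ)

/-- The rational constant `r(M)`. -/
def gtR (n : ℕ) (m : ℕ → ℕ → ℤ) : ℚ :=
  ∏ k ∈ Finset.Icc 1 n, ∏ j ∈ Finset.Icc 1 (k - 1), ∏ i ∈ Finset.Icc 1 j,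
    (ifact (m i k - m j (k - 1) - (i : ℤ) + (j : ℤ)) *
        ifact (m i (k - 1) - m (j + 1) k - (i : ℤ) + (j : ℤ))) /
      (ifact (m i (k - 1) - m j (k - 1) - (i : ℤ) + (j : ℤ)) *
        ifact (m i k - m (j + 1) k - (i : ℤ) + (j : ℤ)))

lemma gt_key (a b c d a' b' c' d' : ℤ) (h1 : a = a') (h2 : b = b') (h3 : c = c')
    (h4 : d = d') :
    (ifact a * ifact b) / (ifact c * ifact d) =
      (ifact b' * ifact a') / (ifact c' * ifact d') := by
  subst h1 h2 h3 h4; rw [mul_comm]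

/-- `r(M^∨) = r(M)` for a Gel'fand–Tsetlin pattern `M` of type a dominant `λ`. -/
theorem statement1 (n : ℕ) (hn : 1 ≤ n) (lam : ℕ → ℤ) (hdom : IsDominant n lam)
    (m : ℕ → ℕ → ℤ) (hM : IsGTPattern n lam m) :
    gtR n (gtDual m) = gtR n m := by
  unfold gtR
  refine Finset.prod_congr rfl ?_
  intro k hk
  obtain ⟨hk1, hk2⟩ := Finset.mem_Icc.mp hk
  rw [Finset.prod_sigma', Finset.prod_sigma']
  refine Finset.prod_nbij' (fun p => ⟨k - p.2, k - p.1⟩) (fun p => ⟨k - p.2, k - p.1⟩)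
    ?_ ?_ ?_ ?_ ?_
  · rintro ⟨j, i⟩ hp
    simp only [Finset.mem_sigma, Finset.mem_Icc] at hp ⊢
    omega
  · rintro ⟨j, i⟩ hp
    simp only [Finset.mem_sigma, Finset.mem_Icc] at hp ⊢
    omega
  · rintro ⟨j, i⟩ hp
    simp only [Finset.mem_sigma, Finset.mem_Icc] at hp
    have h1 : k - (k - j) = j := by omega
    have h2 : k - (k - i) = i := by omega
    dsimp only
    rw [h1, h2]
  · rintro ⟨j, i⟩ hp
    simp only [Finset.mem_sigma, Finset.mem_Icc] at hp
    have h1 : k - (k - j) = j := by omega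
    have h2 : k - (k - i) = i := by omega
    dsimp only
    rw [h1, h2]
  · rintro ⟨j, i⟩ hp
    simp only [Finset.mem_sigma, Finset.mem_Icc] at hp
    obtain ⟨⟨hj1, hj2⟩, hi1, hi2⟩ := hp
    simp only [gtDual]
    have e1 : k - 1 + 1 - j = k - j := by omega
    have e2 : k - 1 + 1 - i = k - i := by omega
    have e3 : k + 1 - i = k - i + 1 := by omega
    have e5 : k + 1 - (j + 1) = k - j := by omega
    rw [e1, e2, e3, e5]
    apply gt_key <;> omega
end

section
/- Let λ = (λ_1,…,λ_n) ∈ ℤ^n be dominant and σ a permutation of {1,…,n}; set γ = (γ_1,…,γ_n) with γ_j = λ_{σ^{-1}(j)}. Define H(γ) = (h_{i,j})_{1≤i≤j≤n} by letting (h_{1,j},…,h_{j,j}) be the decreasing rearrangement of (γ_1,…,γ_j) for each j. Then H(γ) is a Gel'fand–Tsetlin pattern of type λ with weight γ^{H(γ)} = γ, and it is the UNIQUE Gel'fand–Tsetlin pattern of type λ whose weight equals γ. -/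
/-!
Row `j` of `H(γ)` is characterised by counting: `v ≤ h i j` iff at least `i` of
`γ 1, …, γ j` are `≥ v`. Hence row `j + 1` is row `j` with `γ (j + 1)` inserted, which gives the
interlacing and the weight.

For uniqueness compare the partial row sums `T m t j = ∑_{i ≤ t} m i j`. In any pattern of weight
`γ`, interlacing gives `T m t j ≤ T m t (j + 1)` and `T m t j + γ (j + 1) ≤ T m (t + 1) (j + 1)`,
while for `H(γ)` one of the two is an equality, according to whether `t` lies before or after the
inserted entry. Induction up from the empty row gives `T H t j ≤ T m t j`; induction down from the
common top row `λ` gives the reverse inequality, and the partial sums determine the entries.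
-/

open Finset

def countGe (γ : ℕ → ℤ) (j : ℕ) (v : ℤ) : ℕ := #{s ∈ Icc 1 j | v ≤ γ s}

lemma countGe_antitone (γ : ℕ → ℤ) (j : ℕ) : Antitone (countGe γ j) :=
  fun _ _ hvw => card_le_card (monotone_filter_right _ fun _ _ => hvw.trans)

lemma countGe_le (γ : ℕ → ℤ) (j : ℕ) (v : ℤ) : countGe γ j v ≤ j :=
  (card_filter_le _ _).trans (by simp)

lemma countGe_succ (γ : ℕ → ℤ) (j : ℕ) (v : ℤ) :
    countGe γ (j + 1) v = countGe γ j v + if v ≤ γ (j + 1) then 1 else 0 := by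
  simp only [countGe, card_filter]
  exact sum_Icc_succ_top (by omega) _

/-- `f i` is the `i`-th largest of `γ 1, …, γ N`: `f` is the decreasing rearrangement of this
prefix of `γ`. -/
def IsSortedPrefix (γ : ℕ → ℤ) (N : ℕ) (f : ℕ → ℤ) : Prop :=
  ∀ i, 1 ≤ i → i ≤ N → ∀ v, v ≤ f i ↔ i ≤ countGe γ N v

lemma isSortedPrefix_of_map_eq {γ f : ℕ → ℤ} {N : ℕ}
    (hmap : (Icc 1 N).val.map f = (Icc 1 N).val.map γ)
    (hf : ∀ i, 1 ≤ i → i < N → f (i + 1) ≤ f i) : IsSortedPrefix γ N f := by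
  have hanti : AntitoneOn f (Set.Icc 1 N) :=
    antitoneOn_of_succ_le Set.ordConnected_Icc fun a _ ha ha' => by
      simp only [Order.succ_eq_add_one, Set.mem_Icc] at ha ha' ⊢
      exact hf a ha.1 (by omega)
  intro i hi hiN v
  have hcount : countGe γ N v = #{s ∈ Icc 1 N | v ≤ f s} := by
    have hcountP : ∀ g : ℕ → ℤ,
        #{s ∈ Icc 1 N | v ≤ g s} = ((Icc 1 N).val.map g).countP (v ≤ ·) :=
      fun g => by rw [Multiset.countP_map]; rfl
    rw [countGe, hcountP, hcountP, hmap]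
  rw [hcount]
  constructor
  · intro hv
    have hsub : Icc 1 i ⊆ {s ∈ Icc 1 N | v ≤ f s} := fun s hs => by
      rw [mem_Icc] at hs
      rw [mem_filter, mem_Icc]
      have hsN : s ∈ Set.Icc 1 N := ⟨hs.1, hs.2.trans hiN⟩
      exact ⟨hsN, hv.trans (hanti hsN ⟨hi, hiN⟩ hs.2)⟩
    simpa using card_le_card hsub
  · intro hcard
    by_contra hv
    have hsub : {s ∈ Icc 1 N | v ≤ f s} ⊆ Icc 1 (i - 1) := fun s hs => by
      rw [mem_filter, mem_Icc] at hs
      rw [mem_Icc]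
      refine ⟨hs.1.1, Nat.le_sub_one_of_lt (lt_of_not_ge fun his => hv ?_)⟩
      exact hs.2.trans (hanti ⟨hi, hiN⟩ hs.1 his)
    have := card_le_card hsub
    simp only [Nat.card_Icc] at this
    omega

lemma IsSortedPrefix.eq {γ f g : ℕ → ℤ} {N : ℕ} (hf : IsSortedPrefix γ N f)
    (hg : IsSortedPrefix γ N g) {i : ℕ} (hi : 1 ≤ i) (hiN : i ≤ N) : f i = g i :=
  eq_of_forall_le_iff fun v => (hf i hi hiN v).trans (hg i hi hiN v).symm

lemma IsSortedPrefix.interlace {γ f g : ℕ → ℤ} {j : ℕ} (hf : IsSortedPrefix γ j f)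
    (hg : IsSortedPrefix γ (j + 1) g) {i : ℕ} (hi : 1 ≤ i) (hij : i ≤ j) :
    f i ≤ g i ∧ g (i + 1) ≤ f i := by
  constructor
  · refine (hg i hi (by omega) _).2 ?_
    have := (hf i hi hij (f i)).1 le_rfl
    rw [countGe_succ]
    omega
  · refine (hf i hi hij _).2 ?_
    have := (hg (i + 1) (by omega) (by omega) (g (i + 1))).1 le_rfl
    rw [countGe_succ] at this
    split_ifs at this <;> omega

/-- Row `j + 1` arises from row `j` by inserting `γ (j + 1)` right after the entries that are
`≥ γ (j + 1)`. -/
lemma IsSortedPrefix.insert {γ f g : ℕ → ℤ} {j : ℕ} (hf : IsSortedPrefix γ j f)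
    (hg : IsSortedPrefix γ (j + 1) g) :
    (∀ i, 1 ≤ i → i ≤ countGe γ j (γ (j + 1)) → g i = f i) ∧
    g (countGe γ j (γ (j + 1)) + 1) = γ (j + 1) ∧
    (∀ i, countGe γ j (γ (j + 1)) < i → i ≤ j → g (i + 1) = f i) := by
  have hkj := countGe_le γ j (γ (j + 1))
  have hmono := countGe_antitone γ j
  refine ⟨fun i hi hik => eq_of_forall_le_iff fun v => ?_, eq_of_forall_le_iff fun v => ?_,
    fun i hki hij => eq_of_forall_le_iff fun v => ?_⟩
  · rw [hg i hi (by omega) v, hf i hi (by omega) v, countGe_succ]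
    split_ifs with hv
    · have := hmono hv
      omega
    · omega
  · rw [hg (countGe γ j (γ (j + 1)) + 1) (by omega) (by omega) v, countGe_succ]
    split_ifs with hv
    · exact iff_of_true (by have := hmono hv; omega) hv
    · exact iff_of_false (by have := hmono (not_le.1 hv).le; omega) hv
  · rw [hg (i + 1) (by omega) (by omega) v, hf i (by omega) hij v, countGe_succ]
    split_ifs with hv
    · omega
    · have := hmono (not_le.1 hv).le
      omega

def partialSum (m : ℕ → ℕ → ℤ) (t j : ℕ) : ℤ := ∑ i ∈ Icc 1 t, m i j

lemma partialSum_succ (m : ℕ → ℕ → ℤ) (t j : ℕ) :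
    partialSum m (t + 1) j = partialSum m t j + m (t + 1) j :=
  sum_Icc_succ_top (by omega) _

lemma gtWeight_succ (m : ℕ → ℕ → ℤ) (j : ℕ) :
    gtWeight m (j + 1) = partialSum m (j + 1) (j + 1) - partialSum m j j :=
  rfl

lemma partialSum_succ_row_of_isSortedPrefix {γ : ℕ → ℤ} {h : ℕ → ℕ → ℤ} {j : ℕ}
    (hj : IsSortedPrefix γ j (h · j)) (hj' : IsSortedPrefix γ (j + 1) (h · (j + 1))) :
    (∀ t ≤ countGe γ j (γ (j + 1)), partialSum h t (j + 1) = partialSum h t j) ∧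
    (∀ t, countGe γ j (γ (j + 1)) ≤ t → t ≤ j →
      partialSum h (t + 1) (j + 1) = partialSum h t j + γ (j + 1)) := by
  obtain ⟨hbelow, hinsert, habove⟩ := hj.insert hj'
  have hsum_below :
      ∀ t ≤ countGe γ j (γ (j + 1)), partialSum h t (j + 1) = partialSum h t j :=
    fun t ht => sum_congr rfl fun i hi => hbelow i (mem_Icc.1 hi).1 ((mem_Icc.1 hi).2.trans ht)
  refine ⟨hsum_below, fun t hkt htj => ?_⟩
  induction t, hkt using Nat.le_induction with
  | base => rw [partialSum_succ, hsum_below _ le_rfl, hinsert]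
  | succ t hkt ih =>
    rw [partialSum_succ, ih (by omega), partialSum_succ, habove (t + 1) (by omega) htj]
    ring

section Pattern

variable {n : ℕ} {lam : ℕ → ℤ} {m : ℕ → ℕ → ℤ}

lemma IsGTPattern.partialSum_le_succ_row (hm : IsGTPattern n lam m) {t j : ℕ} (ht : t ≤ j)
    (hj : j + 1 ≤ n) : partialSum m t j ≤ partialSum m t (j + 1) :=
  sum_le_sum fun i hi => (hm.2 i j (mem_Icc.1 hi).1 ((mem_Icc.1 hi).2.trans ht) hj).1

/-- By interlacing, `partialSum m (t + 1) (j + 1) - partialSum m t j` decreases in `t`; at `t = j`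
it is the weight. -/
lemma IsGTPattern.partialSum_add_gtWeight_le (hm : IsGTPattern n lam m) {t j : ℕ} (ht : t ≤ j)
    (hj : j + 1 ≤ n) :
    partialSum m t j + gtWeight m (j + 1) ≤ partialSum m (t + 1) (j + 1) := by
  obtain ⟨d, hd⟩ := Nat.exists_eq_add_of_le ht
  induction d generalizing t with
  | zero =>
    obtain rfl : j = t := hd
    rw [gtWeight_succ]
    omega
  | succ d ih =>
    have hnext := ih (t := t + 1) (by omega) (by omega)
    have hinter := (hm.2 (t + 1) j (by omega) (by omega) hj).2
    rw [partialSum_succ m t j, partialSum_succ m (t + 1) (j + 1)] at hnext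
    omega

variable {γ : ℕ → ℤ} {h : ℕ → ℕ → ℤ}

lemma IsGTPattern.partialSum_ge_of_isSortedPrefix (hm : IsGTPattern n lam m)
    (hw : ∀ j, 1 ≤ j → j ≤ n → gtWeight m j = γ j)
    (hh : ∀ j ≤ n, IsSortedPrefix γ j (h · j)) :
    ∀ j ≤ n, ∀ t ≤ j, partialSum h t j ≤ partialSum m t j
  | 0, _, t, ht => by
    obtain rfl : t = 0 := by omega
    simp [partialSum]
  | j + 1, hj, t, ht => by
    have ih := hm.partialSum_ge_of_isSortedPrefix hw hh j (by omega)
    have hkj := countGe_le γ j (γ (j + 1))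
    obtain ⟨hbelow, habove⟩ :=
      partialSum_succ_row_of_isSortedPrefix (hh j (by omega)) (hh (j + 1) hj)
    rcases le_or_gt t (countGe γ j (γ (j + 1))) with htk | htk
    · calc partialSum h t (j + 1) = partialSum h t j := hbelow t htk
        _ ≤ partialSum m t j := ih t (by omega)
        _ ≤ partialSum m t (j + 1) := hm.partialSum_le_succ_row (by omega) hj
    · obtain ⟨t, rfl⟩ : ∃ s, t = s + 1 := ⟨t - 1, by omega⟩
      calc partialSum h (t + 1) (j + 1) = partialSum h t j + gtWeight m (j + 1) := by
            rw [habove t (by omega) (by omega), hw (j + 1) (by omega) hj]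
        _ ≤ partialSum m t j + gtWeight m (j + 1) := add_le_add_left (ih t (by omega)) _
        _ ≤ partialSum m (t + 1) (j + 1) := hm.partialSum_add_gtWeight_le (by omega) hj

lemma IsGTPattern.partialSum_le_of_isSortedPrefix (hm : IsGTPattern n lam m)
    (hw : ∀ j, 1 ≤ j → j ≤ n → gtWeight m j = γ j)
    (hh : ∀ j ≤ n, IsSortedPrefix γ j (h · j))
    (htop : ∀ i, 1 ≤ i → i ≤ n → h i n = lam i) :
    ∀ j ≤ n, ∀ t ≤ j, partialSum m t j ≤ partialSum h t j := by
  intro j hj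
  induction hj using Nat.decreasingInduction with
  | self =>
    intro t ht
    refine le_of_eq (sum_congr rfl fun i hi => ?_)
    rw [mem_Icc] at hi
    rw [hm.1 i hi.1 (hi.2.trans ht), htop i hi.1 (hi.2.trans ht)]
  | of_succ j hj ih =>
    intro t ht
    obtain ⟨hbelow, habove⟩ :=
      partialSum_succ_row_of_isSortedPrefix (hh j hj.le) (hh (j + 1) hj)
    rcases le_total t (countGe γ j (γ (j + 1))) with htk | hkt
    · calc partialSum m t j ≤ partialSum m t (j + 1) := hm.partialSum_le_succ_row ht hj
        _ ≤ partialSum h t (j + 1) := ih t (by omega)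
        _ = partialSum h t j := hbelow t htk
    · refine le_of_add_le_add_right (a := γ (j + 1)) ?_
      calc partialSum m t j + γ (j + 1) = partialSum m t j + gtWeight m (j + 1) := by
            rw [hw (j + 1) (by omega) hj]
        _ ≤ partialSum m (t + 1) (j + 1) := hm.partialSum_add_gtWeight_le ht hj
        _ ≤ partialSum h (t + 1) (j + 1) := ih (t + 1) (by omega)
        _ = partialSum h t j + γ (j + 1) := habove t hkt ht

end Pattern

theorem statement2_general (n : ℕ) (lam γ : ℕ → ℤ) (hdom : IsDominant n lam)
    (hperm : (Finset.Icc 1 n).val.map γ = (Finset.Icc 1 n).val.map lam)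
    (h : ℕ → ℕ → ℤ)
    (hrow : ∀ j : ℕ, 1 ≤ j → j ≤ n →
      ((Finset.Icc 1 j).val.map (fun i => h i j) = (Finset.Icc 1 j).val.map γ) ∧
      ∀ i : ℕ, 1 ≤ i → i < j → h (i + 1) j ≤ h i j) :
    IsGTPattern n lam h ∧
    (∀ j : ℕ, 1 ≤ j → j ≤ n → gtWeight h j = γ j) ∧
    (∀ m : ℕ → ℕ → ℤ, IsGTPattern n lam m →
      (∀ j : ℕ, 1 ≤ j → j ≤ n → gtWeight m j = γ j) →
      ∀ i j : ℕ, 1 ≤ i → i ≤ j → j ≤ n → m i j = h i j) := by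
  have hsorted : ∀ j ≤ n, IsSortedPrefix γ j (h · j) := by
    intro j hj
    rcases Nat.eq_zero_or_pos j with rfl | hj0
    · intro i hi hi0
      omega
    · exact isSortedPrefix_of_map_eq (hrow j hj0 hj).1 (hrow j hj0 hj).2
  have htop : ∀ i, 1 ≤ i → i ≤ n → h i n = lam i := fun i hi hin =>
    (hsorted n le_rfl).eq (isSortedPrefix_of_map_eq hperm.symm hdom) hi hin
  have hGT : IsGTPattern n lam h := ⟨htop, fun i j hi hij hjn =>
    (hsorted j (by omega)).interlace (hsorted (j + 1) hjn) hi hij⟩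
  have hwh : ∀ j, 1 ≤ j → j ≤ n → gtWeight h j = γ j := by
    intro j hj hjn
    obtain ⟨j, rfl⟩ : ∃ i, j = i + 1 := ⟨j - 1, by omega⟩
    rw [gtWeight_succ, (partialSum_succ_row_of_isSortedPrefix (hsorted j (by omega))
      (hsorted (j + 1) hjn)).2 j (countGe_le γ j _) le_rfl]
    ring
  refine ⟨hGT, hwh, fun m hm hwm i j hi hij hjn => ?_⟩
  have hsum : ∀ t ≤ j, partialSum m t j = partialSum h t j := fun t ht =>
    le_antisymm (hm.partialSum_le_of_isSortedPrefix hwm hsorted htop j hjn t ht)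
      (hm.partialSum_ge_of_isSortedPrefix hwm hsorted j hjn t ht)
  obtain ⟨i, rfl⟩ : ∃ s, i = s + 1 := ⟨i - 1, by omega⟩
  have hentry := hsum (i + 1) hij
  rw [partialSum_succ, partialSum_succ, hsum i (by omega)] at hentry
  exact add_left_cancel hentry

/-- If `γ = σλ` is an extremal weight (i.e. `γ` is a rearrangement of the dominant `λ`),
and `h = H(γ)` is the triangular array whose `j`-th row is the decreasing rearrangement of
`(γ_1, …, γ_j)`, then `H(γ)` is a Gel'fand–Tsetlin pattern of type `λ`, its weight is `γ`,
and it is the unique Gel'fand–Tsetlin pattern of type `λ` with weight `γ`. -/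
theorem statement2 (n : ℕ) (hn : 1 ≤ n) (lam γ : ℕ → ℤ) (hdom : IsDominant n lam)
    (hperm : (Finset.Icc 1 n).val.map γ = (Finset.Icc 1 n).val.map lam)
    (h : ℕ → ℕ → ℤ)
    (hrow : ∀ j : ℕ, 1 ≤ j → j ≤ n →
      ((Finset.Icc 1 j).val.map (fun i => h i j) = (Finset.Icc 1 j).val.map γ) ∧
      ∀ i : ℕ, 1 ≤ i → i < j → h (i + 1) j ≤ h i j) :
    IsGTPattern n lam h ∧
    (∀ j : ℕ, 1 ≤ j → j ≤ n → gtWeight h j = γ j) ∧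
    (∀ m : ℕ → ℕ → ℤ, IsGTPattern n lam m →
      (∀ j : ℕ, 1 ≤ j → j ≤ n → gtWeight m j = γ j) →
      ∀ i j : ℕ, 1 ≤ i → i ≤ j → j ≤ n → m i j = h i j) :=
  statement2_general n lam γ hdom hperm h hrow
end

section
/- Let λ ∈ ℤ^n be dominant, σ a permutation of {1,…,n}, and γ = σλ the corresponding extremal weight. Let H(γ) be the Gel'fand–Tsetlin pattern of type λ whose j-th row is the decreasing rearrangement of (γ_1,…,γ_j). Then r(H(γ)) = 1, where r(M) = ∏_{1≤i≤j<k≤n} [(m_{i,k}−m_{j,k−1}−i+j)!(m_{i,k−1}−m_{j+1,k}−i+j)!]/[(m_{i,k−1}−m_{j,k−1}−i+j)!(m_{i,k}−m_{j+1,k}−i+j)!]. -/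
/-! Passing from row `k` to row `k + 1` of `H(γ)` inserts `γ_{k+1}` into a decreasing list at
some position `t`: the entries before `t` stay where they are and those from `t` on move one
place to the right. So every factor of `r(H(γ))` has `m_{i,k+1} = m_{i,k}` (when `i < t`) or
`m_{j,k} = m_{j+1,k+1}` (when `j ≥ t`), and in either case its numerator and denominator are the
same two factorials. -/

-- A decreasing list is determined by its multiset, so `B` is the ordered insertion of `c` into `A`.
theorem List.exists_eq_append_cons_of_perm_cons {α : Type*} [LinearOrder α] {A B : List α}
    {c : α}
    (hA : A.Pairwise (· ≥ ·)) (hB : B.Pairwise (· ≥ ·)) (hBA : B.Perm (c :: A)) :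
    ∃ l₁ l₂, A = l₁ ++ l₂ ∧ B = l₁ ++ c :: l₂ := by
  have hB' : B = A.orderedInsert (· ≥ ·) c :=
    hBA.trans (List.perm_orderedInsert _ c A).symm |>.eq_of_pairwise' hB (hA.orderedInsert c)
  exact ⟨_, _, List.takeWhile_append_dropWhile.symm,
    hB'.trans (List.orderedInsert_eq_take_drop _ c A)⟩

theorem List.pairwise_ge_map_range'_one {α : Type*} [Preorder α] {f : ℕ → α} {m : ℕ}
    (hf : ∀ i, 1 ≤ i → i < m → f (i + 1) ≤ f i) :
    ((List.range' 1 m).map f).Pairwise (· ≥ ·) := by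
  rw [← List.isChain_iff_pairwise, List.isChain_iff_getElem]
  intro i hi
  simp only [List.length_map, List.length_range'] at hi
  simpa [Nat.add_comm 1, Nat.add_assoc] using hf (i + 1) (by omega) (by omega)

theorem List.getElem?_map_range'_one {α : Type*} (f : ℕ → α) {m i : ℕ} (hi : i < m) :
    ((List.range' 1 m).map f)[i]? = some (f (i + 1)) := by
  simp [List.getElem?_range' hi, Nat.add_comm]

theorem exists_shift_index_of_map_Icc_eq_cons {α : Type*} [LinearOrder α] {a b : ℕ → α}
    {m : ℕ} {c : α}
    (ha : ∀ i, 1 ≤ i → i < m → a (i + 1) ≤ a i)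
    (hb : ∀ i, 1 ≤ i → i < m + 1 → b (i + 1) ≤ b i)
    (hab : (Finset.Icc 1 (m + 1)).val.map b = c ::ₘ (Finset.Icc 1 m).val.map a) :
    ∃ t, (∀ i, 1 ≤ i → i < t → b i = a i) ∧ (∀ j, t ≤ j → j ≤ m → a j = b (j + 1)) := by
  obtain ⟨l₁, l₂, hA, hB⟩ := List.exists_eq_append_cons_of_perm_cons
    (List.pairwise_ge_map_range'_one ha) (List.pairwise_ge_map_range'_one hb)
    (Multiset.coe_eq_coe.mp hab)
  have hlen : l₁.length + l₂.length = m := by simpa using (congrArg List.length hA).symm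
  refine ⟨l₁.length + 1, fun i hi hit => ?_, fun j hjt hjm => ?_⟩
  · obtain ⟨p, rfl⟩ : ∃ p, i = p + 1 := ⟨i - 1, by omega⟩
    have key := congrArg (·[p]?) hB
    simp only [List.getElem?_append_left (show p < l₁.length by omega)] at key
    rwa [← List.getElem?_append_left (l₂ := l₂) (show p < l₁.length by omega), ← hA,
      List.getElem?_map_range'_one _ (by omega), List.getElem?_map_range'_one _ (by omega),
      Option.some_inj] at key
  · obtain ⟨p, rfl⟩ : ∃ p, j = p + 1 := ⟨j - 1, by omega⟩
    have key := congrArg (·[p + 1]?) hB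
    simp only [List.getElem?_append_right (show l₁.length ≤ p + 1 by omega),
      show p + 1 - l₁.length = p - l₁.length + 1 by omega, List.getElem?_cons_succ] at key
    rwa [← List.getElem?_append_right (l₁ := l₁) (show l₁.length ≤ p by omega), ← hA,
      List.getElem?_map_range'_one _ (by omega), List.getElem?_map_range'_one _ (by omega),
      Option.some_inj, eq_comm] at key

theorem ifact_ne_zero (a : ℤ) : ifact a ≠ 0 := by
  simp [ifact, Nat.factorial_ne_zero]

theorem gtR_eq_one_of_exists_shift_index (n : ℕ) (m : ℕ → ℕ → ℤ)
    (hm : ∀ k, 1 ≤ k → k + 1 ≤ n → ∃ t,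
      (∀ i, 1 ≤ i → i < t → m i (k + 1) = m i k) ∧
      (∀ j, t ≤ j → j ≤ k → m j k = m (j + 1) (k + 1))) :
    gtR n m = 1 := by
  refine Finset.prod_eq_one fun k hk => Finset.prod_eq_one fun j hj => ?_
  simp only [Finset.mem_Icc] at hk hj
  obtain ⟨k, rfl⟩ : ∃ k', k = k' + 1 := ⟨k - 1, by omega⟩
  simp only [Nat.add_sub_cancel] at hj ⊢
  obtain ⟨t, hleft, hright⟩ := hm k (by omega) hk.2
  refine Finset.prod_eq_one fun i hi => ?_
  simp only [Finset.mem_Icc] at hi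
  by_cases hit : i < t
  · rw [hleft i hi.1 hit]
    exact div_self (mul_ne_zero (ifact_ne_zero _) (ifact_ne_zero _))
  · rw [hright j (by omega) hj.2, mul_comm]
    exact div_self (mul_ne_zero (ifact_ne_zero _) (ifact_ne_zero _))

theorem Finset.map_Icc_one_add_one_val {α : Type*} (f : ℕ → α) (m : ℕ) :
    (Finset.Icc 1 (m + 1)).val.map f = f (m + 1) ::ₘ (Finset.Icc 1 m).val.map f := by
  rw [← Finset.insert_Icc_right_eq_Icc_add_one (by omega), Finset.insert_val_of_notMem (by simp),
    Multiset.map_cons]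

theorem statement3_general (n : ℕ) (γ : ℕ → ℤ)
    (h : ℕ → ℕ → ℤ)
    (hrow : ∀ j : ℕ, 1 ≤ j → j ≤ n →
      ((Finset.Icc 1 j).val.map (fun i => h i j) = (Finset.Icc 1 j).val.map γ) ∧
      ∀ i : ℕ, 1 ≤ i → i < j → h (i + 1) j ≤ h i j) :
    gtR n h = 1 := by
  refine gtR_eq_one_of_exists_shift_index n h fun k hk hkn => ?_
  obtain ⟨hrow_k, hsorted_k⟩ := hrow k hk (by omega)
  obtain ⟨hrow_succ, hsorted_succ⟩ := hrow (k + 1) (by omega) hkn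
  refine exists_shift_index_of_map_Icc_eq_cons (c := γ (k + 1)) hsorted_k hsorted_succ ?_
  rw [hrow_succ, hrow_k, Finset.map_Icc_one_add_one_val]

/-- `r(H(γ)) = 1` for an extremal weight `γ = σλ` of the dominant weight `λ`, where `H(γ)`
is the Gel'fand–Tsetlin pattern of type `λ` whose `j`-th row is the decreasing
rearrangement of `(γ_1, …, γ_j)`. -/
theorem statement3 (n : ℕ) (hn : 1 ≤ n) (lam γ : ℕ → ℤ) (hdom : IsDominant n lam)
    (hperm : (Finset.Icc 1 n).val.map γ = (Finset.Icc 1 n).val.map lam)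
    (h : ℕ → ℕ → ℤ)
    (hrow : ∀ j : ℕ, 1 ≤ j → j ≤ n →
      ((Finset.Icc 1 j).val.map (fun i => h i j) = (Finset.Icc 1 j).val.map γ) ∧
      ∀ i : ℕ, 1 ≤ i → i < j → h (i + 1) j ≤ h i j) :
    gtR n h = 1 :=
  statement3_general n γ h hrow
end

section
/- Let K be a field of characteristic 0 and n ≥ 1. Then the group GL_n(K) is generated by the subgroup T_n(K) of invertible diagonal matrices together with the image of GL_n(ℤ) in GL_n(K) (i.e. the set of matrices with entries in the image of ℤ → K which are invertible with inverse also having entries in the image of ℤ). -/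
/-!
Row and column reduction writes every invertible matrix over a field as a product of an invertible
diagonal matrix and transvections `1 + c • E i j`. For `c ≠ 0` such a transvection is the conjugate
of the integral transvection `1 + E i j` by the diagonal matrix with `c` in position `i` and `1`
elsewhere, so diagonal matrices and the image of `GL_n(ℤ)` already generate `GL_n(K)`.
-/

namespace Matrix

variable {n : Type*} [Fintype n] [DecidableEq n]

theorem _root_.RingHom.mapMatrix_transvection {R S : Type*} [CommRing R] [CommRing S]
    (f : R →+* S) (i j : n) (c : R) :
    f.mapMatrix (transvection i j c) = transvection i j (f c) := by
  simp [transvection, map_add]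

variable {K : Type*} [Field K]

theorem transvection_eq_diagonal_mul_transvection_one_mul_diagonal {i j : n}
    (hij : i ≠ j) {c : K} (hc : c ≠ 0) :
    transvection i j c = diagonal (Function.update 1 i c) * transvection i j 1 *
      diagonal (Function.update 1 i c⁻¹) := by
  ext a b
  simp only [transvection, Matrix.mul_add, diagonal_mul, mul_diagonal, add_apply, single_apply,
    one_apply, Function.update_apply, Pi.one_apply]
  grind

namespace GeneralLinearGroup

theorem eq_top_of_diagonal_mem_of_transvection_one_mem (H : Subgroup (GL n K))
    (hdiag : ∀ (g : GL n K) (d : n → K), (g : Matrix n n K) = diagonal d → g ∈ H)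
    (htransvection : ∀ (i j : n) (hij : i ≠ j),
      SpecialLinearGroup.toGL (SpecialLinearGroup.transvection hij (1 : K)) ∈ H) :
    H = ⊤ := by
  let P : Matrix n n K → Prop := fun M => ∃ g ∈ H, (g : Matrix n n K) = M
  have hmul : ∀ A B, P A → P B → P (A * B) := by
    rintro A B ⟨g, hg, rfl⟩ ⟨h, hh, rfl⟩
    exact ⟨g * h, mul_mem hg hh, Units.val_mul g h⟩
  have hdiagP : ∀ D : n → K, Matrix.det (diagonal D) ≠ 0 → P (diagonal D) := fun D hD =>
    ⟨mkOfDetNeZero _ hD, hdiag _ D rfl, rfl⟩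
  have htransvectionP : ∀ t : TransvectionStruct n K, P t.toMatrix := by
    rintro ⟨i, j, hij, c⟩
    rcases eq_or_ne c 0 with rfl | hc
    · exact ⟨1, one_mem H, (transvection_zero i j).symm⟩
    have hupdate : ∀ x : K, x ≠ 0 → Matrix.det (diagonal (Function.update (1 : n → K) i x)) ≠ 0 :=
      fun x hx => by simp [Finset.prod_update_of_mem, hx]
    rw [TransvectionStruct.toMatrix_mk,
      transvection_eq_diagonal_mul_transvection_one_mul_diagonal hij hc]
    exact hmul _ _ (hmul _ _ (hdiagP _ (hupdate c hc)) ⟨_, htransvection i j hij, rfl⟩)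
      (hdiagP _ (hupdate c⁻¹ (inv_ne_zero hc)))
  refine eq_top_iff.2 fun g _ => ?_
  obtain ⟨g', hg', hval⟩ := diagonal_transvection_induction_of_det_ne_zero P g g.det_ne_zero
    hdiagP htransvectionP fun A B _ _ => hmul A B
  rwa [← Units.ext hval]

end GeneralLinearGroup

end Matrix

theorem statement13_general (K : Type*) [Field K] (n : ℕ) :
    Subgroup.closure
      ({g : Matrix.GeneralLinearGroup (Fin n) K |
          ∃ d : Fin n → K, (g : Matrix (Fin n) (Fin n) K) = Matrix.diagonal d} ∪
        Set.range (fun g : Matrix.GeneralLinearGroup (Fin n) ℤ =>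
          Units.map ((Int.castRingHom K).mapMatrix (m := Fin n)).toMonoidHom g)) = ⊤ := by
  refine Matrix.GeneralLinearGroup.eq_top_of_diagonal_mem_of_transvection_one_mem _
    (fun g d hg => Subgroup.subset_closure (Or.inl ⟨d, hg⟩)) fun i j hij => ?_
  let integralTransvection := Matrix.SpecialLinearGroup.transvection hij (1 : ℤ)
  refine Subgroup.subset_closure (Or.inr ⟨integralTransvection.toGL, Units.ext ?_⟩)
  have hmap := (Int.castRingHom K).mapMatrix_transvection (n := Fin n) i j 1
  rwa [map_one] at hmap

/-- For a field `K` of characteristic zero, `GL_n(K)` is generated by the invertible diagonal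
matrices together with the image of `GL_n(ℤ) → GL_n(K)`. -/
theorem statement13 (K : Type*) [Field K] [CharZero K] (n : ℕ) :
    Subgroup.closure
      ({g : Matrix.GeneralLinearGroup (Fin n) K |
          ∃ d : Fin n → K, (g : Matrix (Fin n) (Fin n) K) = Matrix.diagonal d} ∪
        Set.range (fun g : Matrix.GeneralLinearGroup (Fin n) ℤ =>
          Units.map ((Int.castRingHom K).mapMatrix (m := Fin n)).toMonoidHom g)) = ⊤ :=
  statement13_general K n
end

section
/- Let ε ∈ {1, −1}, c ∈ ℝ, and k ∈ ℕ. Then the complex Gaussian integral ∫_{ℝ²} (x + iy)^k · exp(−2π(x² + y²) − 2πεic·(2x)) · 2 dx dy equals (−εic)^k · exp(−2πc²). In other words, with z = x + iy, d_ℂz = 2dxdy, and ψ_ε(z) = exp(2πεi(z + z̄)), one has ∫_ℂ z^k e^{−2π|z|²} ψ_{−ε}(cz) d_ℂz = (−εic)^k e^{−2πc²}. -/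
/-!
With `w = -4πεic` the integrand is `z ^ k * e^{-2π|z|² + w Re z}`. Integrating by parts along
the directions `1` and `i` and adding the second identity times `i`, the terms coming from
differentiating `z ^ k` cancel (`∂ₓ + i∂_y` kills the holomorphic `z ^ k`), while the Gaussian
contributes the factor `w - 4πz`. Hence `4π I_{k+1} = w I_k`, and `I_0 = e^{w²/8π} / 2` is a
Gaussian integral.
-/

open MeasureTheory Complex Real

noncomputable def tiltedGaussian (w z : ℂ) : ℂ := cexp (-(2 * π) * ‖z‖ ^ 2 + w * z.re)

@[fun_prop]
lemma continuous_tiltedGaussian (w : ℂ) : Continuous (tiltedGaussian w) := by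
  unfold tiltedGaussian; fun_prop

lemma norm_tiltedGaussian (w z : ℂ) :
    ‖tiltedGaussian w z‖ = rexp (-(2 * π) * ‖z‖ ^ 2 + w.re * z.re) := by
  simp [tiltedGaussian, Complex.norm_exp, ← ofReal_pow]

lemma integral_tiltedGaussian (w : ℂ) :
    ∫ z, tiltedGaussian w z = 2⁻¹ * cexp (w ^ 2 / (8 * π)) := by
  have h := GaussianFourier.integral_cexp_neg_mul_sq_norm_add (V := ℂ)
    (show 0 < (2 * π : ℂ).re by simp [pi_pos]) w 1
  simp only [Complex.finrank_real_complex, Complex.inner, map_one, mul_one, norm_one] at h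
  convert h using 2
  · simp [tiltedGaussian]
  · rw [show (π : ℂ) / (2 * π) = 2⁻¹ by field_simp]; norm_num
  · push_cast; ring_nf

lemma pow_le_factorial_div_pow_mul_exp (n : ℕ) {a r : ℝ} (ha : 0 < a) (hr : 0 ≤ r) :
    r ^ n ≤ n.factorial / a ^ n * rexp (a * (1 + r ^ 2)) := by
  have hexp := Real.pow_div_factorial_le_exp (a * (1 + r ^ 2)) (by positivity) n
  have hpow : r ^ n ≤ (1 + r ^ 2) ^ n := pow_le_pow_left₀ hr (by nlinarith) n
  rw [div_le_iff₀ (by positivity), mul_pow] at hexp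
  rw [div_mul_eq_mul_div, le_div_iff₀ (by positivity)]
  nlinarith [pow_pos ha n]

lemma integrable_norm_pow_mul_tiltedGaussian (n : ℕ) (w : ℂ) :
    Integrable fun z : ℂ => ‖z‖ ^ n * ‖tiltedGaussian w z‖ := by
  have hdom := (GaussianFourier.integrable_cexp_neg_mul_sq_norm_add (V := ℂ)
    (show 0 < (π : ℂ).re by simp [pi_pos]) w 1).norm.const_mul (n.factorial / π ^ n * rexp π)
  refine hdom.mono' (by fun_prop) (Filter.Eventually.of_forall fun z => ?_)
  have hz := pow_le_factorial_div_pow_mul_exp n pi_pos (norm_nonneg z)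
  rw [norm_mul, norm_pow, norm_norm, norm_norm, norm_tiltedGaussian, Complex.norm_exp]
  simp only [Complex.inner, map_one, mul_one]
  have hre : (-(π : ℂ) * ‖z‖ ^ 2 + w * z.re).re = -π * ‖z‖ ^ 2 + w.re * z.re := by
    simp [← ofReal_pow]
  rw [hre, mul_assoc, ← Real.exp_add]
  calc ‖z‖ ^ n * rexp (-(2 * π) * ‖z‖ ^ 2 + w.re * z.re)
      ≤ n.factorial / π ^ n * rexp (π * (1 + ‖z‖ ^ 2))
          * rexp (-(2 * π) * ‖z‖ ^ 2 + w.re * z.re) := by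
        gcongr
    _ = n.factorial / π ^ n * rexp (π + (-π * ‖z‖ ^ 2 + w.re * z.re)) := by
        rw [mul_assoc, ← Real.exp_add]; ring_nf

lemma integrable_mul_tiltedGaussian {f : ℂ → ℂ} (hf : Continuous f) {C : ℝ} {n : ℕ}
    (hle : ∀ z, ‖f z‖ ≤ C * ‖z‖ ^ n) (w : ℂ) :
    Integrable fun z => f z * tiltedGaussian w z := by
  refine ((integrable_norm_pow_mul_tiltedGaussian n w).const_mul C).mono' (by fun_prop)
    (Filter.Eventually.of_forall fun z => ?_)
  rw [norm_mul, ← mul_assoc]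
  gcongr
  exact hle z

lemma integrable_pow_mul_tiltedGaussian (k : ℕ) (w : ℂ) :
    Integrable fun z : ℂ => z ^ k * tiltedGaussian w z :=
  integrable_mul_tiltedGaussian (by fun_prop) (C := 1) (n := k) (fun z => by simp) w

lemma hasLineDerivAt_tiltedGaussian (w z v : ℂ) :
    HasLineDerivAt ℝ (tiltedGaussian w)
      ((w * v.re - 4 * π * inner ℝ z v) * tiltedGaussian w z) z v := by
  have hpath : HasDerivAt (fun t : ℝ => z + t • v) v 0 := by
    simpa using ((hasDerivAt_id (0:ℝ)).smul_const v).const_add z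
  have hre : HasDerivAt (fun t : ℝ => ((z + t • v).re : ℂ)) v.re 0 := by
    simpa using (hasDerivAt_id (0:ℝ)).mul_const v.re |>.const_add z.re |>.ofReal_comp
  have := ((hpath.norm_sq.ofReal_comp.const_mul (-(2 * π : ℂ))).add (hre.const_mul w)).cexp
  simp only [Pi.add_apply, ofReal_pow, zero_smul, add_zero] at this
  refine this.congr_deriv ?_
  simp only [tiltedGaussian]; push_cast; ring

lemma integrable_pow_mul_lineDeriv_tiltedGaussian (w v : ℂ) (k : ℕ) :
    Integrable fun z : ℂ =>
      z ^ k * ((w * v.re - 4 * π * inner ℝ z v) * tiltedGaussian w z) := by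
  have hinner : Integrable fun z : ℂ => z ^ k * inner ℝ z v * tiltedGaussian w z := by
    refine integrable_mul_tiltedGaussian (by fun_prop) (C := ‖v‖) (n := k + 1) (fun z => ?_) w
    rw [norm_mul, norm_pow, Complex.norm_real, Real.norm_eq_abs, pow_succ]
    nlinarith [abs_real_inner_le_norm z v, pow_nonneg (norm_nonneg z) k]
  convert ((integrable_pow_mul_tiltedGaussian k w).const_mul (w * v.re)).sub
    (hinner.const_mul (4 * π)) using 2 with z
  simp only [Pi.sub_apply]
  ring

lemma integral_pow_mul_lineDeriv_tiltedGaussian (w v : ℂ) (k : ℕ) :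
    ∫ z, z ^ k * ((w * v.re - 4 * π * inner ℝ z v) * tiltedGaussian w z)
      = -(k * v * ∫ z, z ^ (k - 1) * tiltedGaussian w z) := by
  have hpow (z : ℂ) : HasLineDerivAt ℝ (fun z => z ^ k) (k * z ^ (k - 1) * v) z v := by
    simpa [mul_comm] using ((hasDerivAt_pow k z).hasFDerivAt.restrictScalars ℝ).hasLineDerivAt v
  have h := integral_bilinear_hasLineDerivAt_right_eq_neg_left_of_integrable
    (B := ContinuousLinearMap.mul ℝ ℂ) (μ := volume) (v := v)
    (f := fun z => z ^ k) (f' := fun z => k * z ^ (k - 1) * v)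
    (g := tiltedGaussian w)
    (g' := fun z => (w * v.re - 4 * π * inner ℝ z v) * tiltedGaussian w z)
    ?_ (integrable_pow_mul_lineDeriv_tiltedGaussian w v k) (integrable_pow_mul_tiltedGaussian k w)
    (fun z _ => hpow z) (fun z _ => hasLineDerivAt_tiltedGaussian w z v)
  · simp only [ContinuousLinearMap.mul_apply'] at h
    rw [h, ← integral_const_mul]
    congr 2; funext z; ring
  · convert (integrable_pow_mul_tiltedGaussian (k - 1) w).const_mul (k * v) using 2 with z
    simp only [ContinuousLinearMap.mul_apply']
    ring

lemma integral_pow_succ_mul_tiltedGaussian (w : ℂ) (k : ℕ) :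
    ∫ z, z ^ (k + 1) * tiltedGaussian w z = w / (4 * π) * ∫ z, z ^ k * tiltedGaussian w z := by
  have hsum :
      ∫ z, (w * (z ^ k * tiltedGaussian w z) - 4 * π * (z ^ (k + 1) * tiltedGaussian w z))
      = (∫ z, z ^ k * ((w * (1 : ℂ).re - 4 * π * inner ℝ z 1) * tiltedGaussian w z))
        + I * ∫ z, z ^ k * ((w * I.re - 4 * π * inner ℝ z I) * tiltedGaussian w z) := by
    rw [← integral_const_mul,
      ← integral_add (integrable_pow_mul_lineDeriv_tiltedGaussian w 1 k)
        ((integrable_pow_mul_lineDeriv_tiltedGaussian w I k).const_mul I)]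
    congr 1; funext z
    have hre : inner ℝ z 1 = z.re := by simp [Complex.inner]
    have him : inner ℝ z I = z.im := by simp [Complex.inner]
    rw [hre, him, one_re, I_re, ofReal_one, ofReal_zero]
    linear_combination (4 * π * z ^ k * tiltedGaussian w z) * re_add_im z
  rw [integral_sub ((integrable_pow_mul_tiltedGaussian k w).const_mul w)
    ((integrable_pow_mul_tiltedGaussian (k + 1) w).const_mul _), integral_const_mul,
    integral_const_mul, integral_pow_mul_lineDeriv_tiltedGaussian,
    integral_pow_mul_lineDeriv_tiltedGaussian] at hsum
  have hπ : (π : ℂ) ≠ 0 := ofReal_ne_zero.mpr pi_ne_zero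
  rw [div_mul_eq_mul_div, eq_div_iff (by simp [hπ])]
  linear_combination -hsum + k * (∫ z, z ^ (k - 1) * tiltedGaussian w z) * I_sq

lemma integral_pow_mul_tiltedGaussian (w : ℂ) (k : ℕ) :
    ∫ z, z ^ k * tiltedGaussian w z
      = (w / (4 * π)) ^ k * (2⁻¹ * cexp (w ^ 2 / (8 * π))) := by
  induction k with
  | zero => simpa using integral_tiltedGaussian w
  | succ k ih => rw [integral_pow_succ_mul_tiltedGaussian, ih, pow_succ]; ring

lemma integral_integral_ofReal_add_ofReal_mul_I {E : Type*} [NormedAddCommGroup E]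
    [NormedSpace ℝ E] {f : ℂ → E} (hf : Integrable f) :
    ∫ x : ℝ, ∫ y : ℝ, f (x + y * I) = ∫ z, f z := by
  have e := volume_preserving_equiv_real_prod.symm
  have hemb := measurableEquivRealProd.symm.measurableEmbedding
  have hint : Integrable (fun p : ℝ × ℝ => f (measurableEquivRealProd.symm p))
      (volume.prod volume) := (e.integrable_comp_emb hemb).mpr hf
  rw [← e.integral_comp hemb, Measure.volume_eq_prod, integral_prod _ hint]
  simp [measurableEquivRealProd_symm_apply, mk_eq_add_mul_I]

/-- The complex Gaussian integral: for `ε ∈ {1,-1}`, `c ∈ ℝ` and `k ∈ ℕ`,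
`∫_{ℝ²} (x+iy)^k e^{-2π(x²+y²) - 2πεic·2x} · 2 dx dy = (-εic)^k e^{-2πc²}`;
i.e. `∫_ℂ z^k e^{-2π|z|²} ψ_{-ε}(cz) d_ℂz = (-εic)^k e^{-2πc²}` where
`ψ_ε(z) = exp(2πεi(z+z̄))` and `d_ℂz = 2dxdy`. -/
theorem statement17 (ε : ℝ) (hε : ε = 1 ∨ ε = -1) (c : ℝ) (k : ℕ) :
    ∫ x : ℝ, ∫ y : ℝ,
        ((x : ℂ) + (y : ℂ) * Complex.I) ^ k *
          Complex.exp (-2 * (Real.pi : ℂ) * ((x : ℂ) ^ 2 + (y : ℂ) ^ 2) -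
            2 * (Real.pi : ℂ) * (ε : ℂ) * Complex.I * (c : ℂ) * (2 * (x : ℂ))) * 2 =
      (-(ε : ℂ) * Complex.I * (c : ℂ)) ^ k * Complex.exp (-2 * (Real.pi : ℂ) * (c : ℂ) ^ 2) := by
  set w : ℂ := -(4 * π * ε * I * c) with hw_def
  have hintegrand (x y : ℝ) :
      cexp (-2 * (π : ℂ) * ((x : ℂ) ^ 2 + (y : ℂ) ^ 2) - 2 * π * ε * I * c * (2 * (x : ℂ)))
        = tiltedGaussian w (x + y * I) := by
    have hnorm : (‖(x : ℂ) + y * I‖ : ℂ) ^ 2 = (x : ℂ) ^ 2 + (y : ℂ) ^ 2 := by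
      rw [← ofReal_pow, Complex.sq_norm, normSq_add_mul_I]; push_cast; ring
    have hre : ((x : ℂ) + y * I).re = x := by simp
    simp only [tiltedGaussian, hnorm, hre, hw_def]
    congr 1; ring
  have hε2 : (ε : ℂ) ^ 2 = 1 := by rcases hε with h | h <;> simp [h]
  have hπ : (π : ℂ) ≠ 0 := ofReal_ne_zero.mpr pi_ne_zero
  simp_rw [hintegrand]
  rw [integral_integral_ofReal_add_ofReal_mul_I (f := fun z => z ^ k * tiltedGaussian w z * 2)
    ((integrable_pow_mul_tiltedGaussian k w).mul_const 2), integral_mul_const,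
    integral_pow_mul_tiltedGaussian]
  have hw : w / (4 * π) = -ε * I * c := by rw [hw_def]; field_simp
  have hw2 : w ^ 2 / (8 * π) = -2 * π * c ^ 2 := by
    rw [hw_def, div_eq_iff (by simp [hπ])]
    linear_combination (16 * π ^ 2 * c ^ 2) * (I ^ 2 * hε2 + I_sq)
  rw [hw, hw2]; ring
end
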